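/- arXiv:1307.5043 — 6 statements merged into one kernel-verified Lean document; each statement's English description precedes it below -/
import Mathlib

section
/- Weighted matrix-tree theorem for rooted forests: for every subset R ⊆ V, the determinant of the submatrix of the weighted Laplacian L obtained by deleting the rows and columns indexed by R equals the sum, over all spanning forests F rooted at R, of the products ∏_{i ∈ V\R} w i (F i). -/
/-!
Row `i` of the Laplacian, restricted to the columns outside `R`, is `∑_{k ≠ i} w i k • (e_i - e_k)`,
where `e_k` vanishes for `k ∈ R`. Expanding the determinant multilinearly in the rows turns it into
a sum over all maps `F` with `F i ≠ i` of `∏ w i (F i)` times `det (I - N_F)`, where `N_F` is the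
successor matrix of `F` restricted to `V \ R`. If every vertex reaches `R` under `F`, ordering the
vertices by their distance to `R` makes `I - N_F` unitriangular, so its determinant is `1`.
Otherwise the indicator of the vertices that never reach `R` lies in the kernel of `I - N_F`: this
set is mapped into itself by `F`, and no other vertex is mapped into it.
-/

open scoped Classical

open Finset Matrix

theorem Function.exists_iterate_mem_iff_of_notMem {α : Type*} {f : α → α} {s : Set α} {x : α}
    (hx : x ∉ s) : (∃ m, f^[m] x ∈ s) ↔ ∃ m, f^[m] (f x) ∈ s := by
  constructor
  · rintro ⟨_ | m, hm⟩
    · exact absurd hm hx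
    · exact ⟨m, hm⟩
  · rintro ⟨m, hm⟩
    exact ⟨m + 1, hm⟩

theorem Matrix.det_eq_zero_of_mulVec_eq_zero {n R : Type*} [Fintype n] [DecidableEq n] [CommRing R]
    {A : Matrix n n R} {v : n → R} {j : n} (hj : IsUnit (v j)) (hv : A *ᵥ v = 0) :
    A.det = 0 := by
  rw [← hj.smul_eq_zero, ← det_updateCol_sum]
  refine det_eq_zero_of_column_eq_zero j fun k => ?_
  simpa [mulVec, dotProduct, mul_comm] using congrFun hv k

theorem Matrix.det_of_sum_smul_rows {n ι K : Type*} [Fintype n] [DecidableEq n] [CommRing K]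
    (A : n → Finset ι) (c : n → ι → K) (r : n → ι → n → K) :
    (Matrix.of fun i => ∑ k ∈ A i, c i k • r i k).det =
      ∑ g ∈ Fintype.piFinset A, (∏ i, c i (g i)) * (Matrix.of fun i => r i (g i)).det := by
  change detRowAlternating (fun i => ∑ k ∈ A i, c i k • r i k) =
    ∑ g ∈ Fintype.piFinset A, (∏ i, c i (g i)) * detRowAlternating fun i => r i (g i)
  exact (detRowAlternating.toMultilinearMap.map_sum_finset _ A).trans
    (sum_congr rfl fun g _ => detRowAlternating.map_smul_univ _ _)

theorem Fintype.sum_piFinset_subtype_eq_sum_filter {V M : Type*} [Fintype V] [DecidableEq V]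
    [AddCommMonoid M] (R : Finset V) (A : {x // x ∉ R} → Finset V)
    (φ : ({x // x ∉ R} → V) → M) :
    ∑ g ∈ piFinset A, φ g =
      ∑ F ∈ univ.filter (fun F : V → V => (∀ i ∈ R, F i = i) ∧ ∀ i : {x // x ∉ R}, F i ∈ A i),
        φ (fun i => F i) := by
  let extend (g : {x // x ∉ R} → V) : V → V := fun x => if hx : x ∈ R then x else g ⟨x, hx⟩
  refine sum_nbij' extend (fun F i => F i) ?_ ?_ ?_ ?_ ?_
  · intro g hg
    simp_all [extend]
  · intro F hF
    simp_all
  · intro g _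
    funext i
    simp [extend, i.2]
  · intro F hF
    funext x
    simp only [mem_filter] at hF
    by_cases hx : x ∈ R <;> simp [extend, hx, hF.2.1]
  · intro g _
    congr
    funext i
    simp [extend, i.2]

section RootedIncidence

variable {V K : Type*} [DecidableEq V] [CommRing K] (R : Finset V)

def incidenceRow (i : {x // x ∉ R}) (k : V) : {x // x ∉ R} → K :=
  fun j => (if j = i then 1 else 0) - if (j : V) = k then 1 else 0

def rootedIncidence (F : V → V) : Matrix {x // x ∉ R} {x // x ∉ R} K :=
  Matrix.of fun i => incidenceRow R i (F i)

variable {R} [Fintype V]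

theorem det_rootedIncidence_of_forall_exists_iterate_mem {F : V → V}
    (hF : ∀ i : {x // x ∉ R}, ∃ m, F^[m] i ∈ R) :
    (rootedIncidence R F : Matrix _ _ K).det = 1 := by
  let depth (i : {x // x ∉ R}) : ℕ := Nat.find (hF i)
  have depth_lt : ∀ i j : {x // x ∉ R}, (j : V) = F i → depth j < depth i := by
    intro i j hj
    have hi : F^[depth i] i ∈ R := Nat.find_spec (hF i)
    have h0 : depth i ≠ 0 := fun h0 => i.2 (by rwa [h0] at hi)
    obtain ⟨m, hm⟩ := Nat.exists_eq_add_one_of_ne_zero h0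
    rw [hm, Function.iterate_succ_apply, ← hj] at hi
    have : depth j ≤ m := Nat.find_le hi
    omega
  have entry_eq_zero : ∀ i j : {x // x ∉ R}, depth i ≤ depth j → j ≠ i →
      rootedIncidence R F i j = (0 : K) := by
    intro i j hij hji
    simp only [rootedIncidence, incidenceRow, of_apply, if_neg hji,
      if_neg fun h => (depth_lt i j h).not_ge hij, sub_zero]
  have hblock : (rootedIncidence R F : Matrix _ _ K).BlockTriangular (OrderDual.toDual ∘ depth) :=
    fun i j hij => entry_eq_zero i j hij.le fun h => hij.ne (h ▸ rfl)
  rw [hblock.det]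
  refine prod_eq_one fun a _ => ?_
  suffices (rootedIncidence R F : Matrix _ _ K).toSquareBlock (OrderDual.toDual ∘ depth) a = 1 by
    rw [this, det_one]
  ext ⟨i, hi⟩ ⟨j, hj⟩
  by_cases hji : j = i
  · subst hji
    have : (j : V) ≠ F j := fun h => (depth_lt j j h).false
    simp [toSquareBlock_def, rootedIncidence, incidenceRow, this]
  · have hdepth : depth i = depth j := OrderDual.toDual_inj.mp (hi.trans hj.symm)
    rw [toSquareBlock_def, of_apply, entry_eq_zero i j hdepth.le hji,
      one_apply_ne fun h => hji (congrArg Subtype.val h).symm]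

theorem det_rootedIncidence_of_exists_forall_iterate_notMem {F : V → V}
    (hF : ∃ i : {x // x ∉ R}, ∀ m, F^[m] i ∉ R) :
    (rootedIncidence R F : Matrix _ _ K).det = 0 := by
  obtain ⟨i₀, hi₀⟩ := hF
  let u (x : V) : K := if ∃ m, F^[m] x ∈ R then 0 else 1
  refine det_eq_zero_of_mulVec_eq_zero (v := fun j => u j) (j := i₀) (by simp [u, hi₀]) ?_
  funext i
  have hreach : (∃ m, F^[m] i ∈ R) ↔ ∃ m, F^[m] (F i) ∈ R :=
    Function.exists_iterate_mem_iff_of_notMem (s := (R : Set V)) i.2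
  have hu : u i = u (F i) := by simp only [u, hreach]
  simp only [mulVec, dotProduct, rootedIncidence, of_apply, incidenceRow, sub_mul, ite_mul,
    one_mul, zero_mul, sum_sub_distrib, sum_ite_eq', mem_univ, ↓reduceIte, Pi.zero_apply]
  rw [← sum_subtype Rᶜ (fun _ => mem_compl) (fun x => if x = F i then u x else 0), sum_ite_eq',
    hu]
  by_cases hFi : F i ∈ R
  · simp [u, hFi, show ∃ m, F^[m] (F i) ∈ R from ⟨0, hFi⟩]
  · simp [hFi]

theorem det_rootedIncidence (F : V → V) :
    (rootedIncidence R F : Matrix _ _ K).det =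
      if ∀ i : {x // x ∉ R}, ∃ m, F^[m] i ∈ R then 1 else 0 := by
  split_ifs with hF
  · exact det_rootedIncidence_of_forall_exists_iterate_mem hF
  · push Not at hF
    exact det_rootedIncidence_of_exists_forall_iterate_notMem hF

theorem laplacian_row_eq_sum_smul_incidenceRow (w : V → V → K) (L : Matrix V V K)
    (hL_offdiag : ∀ i j, i ≠ j → L i j = - w i j)
    (hL_diag : ∀ i, L i i = ∑ k ∈ univ.filter (fun k => k ≠ i), w i k) (i : {x // x ∉ R}) :
    (fun j : {x // x ∉ R} => L i j) =
      ∑ k ∈ univ.filter (fun k => k ≠ (i : V)), w i k • incidenceRow R i k := by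
  funext j
  simp only [Finset.sum_apply, Pi.smul_apply, incidenceRow, smul_eq_mul, mul_sub, sum_sub_distrib]
  by_cases hji : j = i
  · subst hji
    simp [hL_diag]
  · have hij : (i : V) ≠ j := fun h => hji (Subtype.ext h).symm
    simp [hji, hL_offdiag _ _ hij, hij.symm]

end RootedIncidence

/-- **Weighted matrix-tree theorem for rooted forests.**
Let `V` be a finite vertex set and `w : V → V → ℂ` a weight function on directed
edges.  The weighted Laplacian `L` has `L i j = -w i j` for `i ≠ j` and
`L i i = ∑_{k ≠ i} w i k`.  For any subset `R ⊆ V`, the determinant of the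
submatrix of `L` obtained by deleting the rows and columns indexed by `R` equals
the sum over all spanning forests rooted at `R` (functions `F` on `V \ R` with
`F i ≠ i` and such that from every `i ∉ R` some finite iterate of `F` lands in
`R`; we normalize `F` to be the identity on `R`) of the edge-weight products
`∏_{i ∈ V \ R} w i (F i)`. -/
theorem weighted_matrix_tree_theorem_for_rooted_forests
    {V : Type*} [Fintype V] [DecidableEq V]
    (w : V → V → ℂ) (R : Finset V) (L : Matrix V V ℂ)
    (hL_offdiag : ∀ i j, i ≠ j → L i j = - w i j)
    (hL_diag : ∀ i, L i i = ∑ k ∈ Finset.univ.filter (fun k => k ≠ i), w i k) :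
    (Matrix.of fun i j : {x : V // x ∉ R} => L i j).det =
      ∑ F ∈ (Finset.univ : Finset (V → V)).filter
          (fun F => (∀ i ∈ R, F i = i) ∧ (∀ i, i ∉ R → F i ≠ i) ∧
            (∀ i, i ∉ R → ∃ m : ℕ, F^[m] i ∈ R)),
        ∏ i ∈ Rᶜ, w i (F i) := by
  have hrows : (Matrix.of fun i j : {x : V // x ∉ R} => L i j) =
      Matrix.of fun i : {x : V // x ∉ R} =>
        ∑ k ∈ univ.filter (fun k => k ≠ (i : V)), w i k • incidenceRow R i k :=
    congrArg Matrix.of (funext (laplacian_row_eq_sum_smul_incidenceRow w L hL_offdiag hL_diag))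
  rw [hrows, Matrix.det_of_sum_smul_rows, Fintype.sum_piFinset_subtype_eq_sum_filter, sum_filter,
    sum_filter]
  refine sum_congr rfl fun F _ => ?_
  rw [← rootedIncidence.eq_1, det_rootedIncidence,
    ← prod_subtype Rᶜ (fun _ => mem_compl) (fun x => w x (F x))]
  simp only [mem_filter, mem_univ, true_and, Subtype.forall, mul_ite, mul_one, mul_zero,
    ← ite_and, and_assoc]
end

section
/- Let Ω : E → ℝ be smooth (C³ suffices) and suppose that at every point its Hessian is a scalar multiple of η, i.e. for every x ∈ E there is f(x) ∈ ℝ with D²Ω(x)(u,v) = f(x)·η(u,v) for all u,v ∈ E. Then there exist a ∈ ℝ, a linear functional b : E → ℝ, and c ∈ ℝ such that Ω(x) = a + b(x) + c·η(x,x) for all x ∈ E. (This is the general solution Ω = a + b_μ x^μ + c x² of the flat-space conformally invariant Einstein-scale equation (∇_μ∇_ν + Φ_{μν})₀ Ω = 0.) -/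
/-!
Write `D²Ω(x) = f(x) • η`. Differentiating once more, `D³Ω(x)(w, u, v) = Df(x)(w) η(u, v)`, and
the symmetry of `D³Ω` in `w, u` gives `Df(x)(w) η(u, ·) = Df(x)(u) η(w, ·)`. If `Df(x)(w) ≠ 0`,
every `u` in the kernel of `Df(x)` is then `η`-orthogonal to everything, so `Df(x) : E → ℝ` is
injective, which is impossible when `dim E ≥ 2`. Hence `f` is a constant `c`, the Hessian is the
constant form `c η`, and integrating twice gives `Ω x = Ω 0 + DΩ(0) x + (c / 2) η(x, x)`.
-/

theorem LinearMap.SeparatingLeft.eq_zero_of_mul_eq_mul {K V : Type*} [Field K] [AddCommGroup V]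
    [Module K V] (hdim : 2 ≤ Module.finrank K V) {η : V →ₗ[K] V →ₗ[K] K} (hη : η.SeparatingLeft)
    {ℓ : V →ₗ[K] K} (h : ∀ w u v, ℓ w * η u v = ℓ u * η w v) : ℓ = 0 := by
  by_contra hℓ
  obtain ⟨w, hw⟩ : ∃ w, ℓ w ≠ 0 := by
    by_contra!
    exact hℓ (LinearMap.ext this)
  have hinj : Function.Injective ℓ := by
    rw [← LinearMap.ker_eq_bot, LinearMap.ker_eq_bot']
    refine fun u hu => hη u fun v => ?_
    simpa [hu, hw] using h w u v
  have := LinearMap.finrank_le_finrank_of_injective hinj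
  rw [Module.finrank_self] at this
  omega

section

variable {𝕜 E F G H : Type*} [NontriviallyNormedField 𝕜] [NormedAddCommGroup E] [NormedSpace 𝕜 E]
  [NormedAddCommGroup F] [NormedSpace 𝕜 F] [NormedAddCommGroup G] [NormedSpace 𝕜 G]
  [NormedAddCommGroup H] [NormedSpace 𝕜 H]

theorem fderiv_clm_apply_apply_const {A : E → F →L[𝕜] G →L[𝕜] H} {x : E}
    (hA : DifferentiableAt 𝕜 A x) (u : F) (v : G) (w : E) :
    fderiv 𝕜 (fun y => A y u v) x w = fderiv 𝕜 A x w u v := by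
  simp [fderiv_clm_apply, hA, fderiv_clm_apply (hA.clm_apply (differentiableAt_const u))]

end

section

variable {E F : Type*} [NormedAddCommGroup E] [NormedSpace ℝ E] [NormedAddCommGroup F]
  [NormedSpace ℝ F]

theorem eq_quadratic_of_fderiv_fderiv_eq_const {Ω : E → F} {B : E →L[ℝ] E →L[ℝ] F}
    (hΩ : ContDiff ℝ 2 Ω) (hB : ∀ x, fderiv ℝ (fderiv ℝ Ω) x = B) (x : E) :
    Ω x = Ω 0 + fderiv ℝ Ω 0 x + (2 : ℝ)⁻¹ • B x x := by
  have hsymm : ∀ u v, B u v = B v u := by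
    simpa [IsSymmSndFDerivAt, hB] using hΩ.contDiffAt.isSymmSndFDerivAt (x := 0) (by simp)
  have hD : fderiv ℝ Ω = fun y => fderiv ℝ Ω 0 + B y := by
    refine eq_of_fderiv_eq ((hΩ.fderiv_right le_rfl).differentiable one_ne_zero) (by fun_prop)
      (fun y => by simp [hB]) 0 (by simp)
  have hq : ∀ y, HasFDerivAt (fun y => Ω 0 + fderiv ℝ Ω 0 y + (2 : ℝ)⁻¹ • B y y)
      (fderiv ℝ Ω 0 + B y) y := by
    intro y
    refine (((hasFDerivAt_const (Ω 0) y).add (fderiv ℝ Ω 0).hasFDerivAt).add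
      ((B.hasFDerivAt_of_bilinear (hasFDerivAt_id y) (hasFDerivAt_id y)).const_smul
        (2 : ℝ)⁻¹)).congr_fderiv ?_
    ext v
    simp only [zero_add, id_eq, ContinuousLinearMap.precompR_apply,
      ContinuousLinearMap.compL_apply, ContinuousLinearMap.comp_id, smul_add, add_apply, smul_apply,
      ContinuousLinearMap.precompL_apply, ContinuousLinearMap.id_apply, hsymm v y, add_right_inj]
    module
  have := eq_of_fderiv_eq (hΩ.differentiable two_ne_zero) (fun y => (hq y).differentiableAt)
    (fun y => by rw [(hq y).fderiv, congrFun hD y]) 0 (by simp)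
  exact congrFun this x

theorem exists_fderiv_fderiv_eq_const_mul (hdim : 2 ≤ Module.finrank ℝ E)
    {η : E →ₗ[ℝ] E →ₗ[ℝ] ℝ} (hη : η.SeparatingLeft) {Ω : E → ℝ} (hΩ : ContDiff ℝ 3 Ω)
    (hhess : ∀ x, ∃ f : ℝ, ∀ u v, fderiv ℝ (fderiv ℝ Ω) x u v = f * η u v) :
    ∃ c : ℝ, ∀ x u v, fderiv ℝ (fderiv ℝ Ω) x u v = c * η u v := by
  obtain ⟨u₀, v₀, h₀⟩ : ∃ u v, η u v ≠ 0 := by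
    have : Nontrivial E := Module.nontrivial_of_finrank_pos (R := ℝ) (by omega)
    obtain ⟨u, hu⟩ := exists_ne (0 : E)
    by_contra! h
    exact hu (hη u (h u))
  set f : E → ℝ := fun x => fderiv ℝ (fderiv ℝ Ω) x u₀ v₀ / η u₀ v₀
  have hf : ∀ x u v, fderiv ℝ (fderiv ℝ Ω) x u v = f x * η u v := by
    intro x u v
    obtain ⟨g, hg⟩ := hhess x
    simp [f, hg, h₀]
  have hΩ' : ContDiff ℝ 2 (fderiv ℝ Ω) := hΩ.fderiv_right (by norm_num)
  have hD2 : Differentiable ℝ (fderiv ℝ (fderiv ℝ Ω)) :=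
    (hΩ'.fderiv_right le_rfl).differentiable one_ne_zero
  have hfd : Differentiable ℝ f := by fun_prop
  have hD3 : ∀ x w u v, fderiv ℝ (fderiv ℝ (fderiv ℝ Ω)) x w u v = fderiv ℝ f x w * η u v := by
    intro x w u v
    rw [← fderiv_clm_apply_apply_const (hD2 x), funext (hf · u v), fderiv_mul_const (hfd x)]
    exact mul_comm _ _
  have hDf : ∀ x, fderiv ℝ f x = 0 := by
    intro x
    have := hη.eq_zero_of_mul_eq_mul hdim (ℓ := (fderiv ℝ f x : E →ₗ[ℝ] ℝ)) fun w u v => by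
      simpa [hD3] using congrArg (· v) (hΩ'.contDiffAt.isSymmSndFDerivAt (x := x) (by simp) w u)
    exact_mod_cast this
  exact ⟨f 0, fun x u v => by rw [hf, is_const_of_fderiv_eq_zero hfd hDf x 0]⟩

end

theorem einstein_scale_general_solution_general
    {E : Type*} [NormedAddCommGroup E] [NormedSpace ℝ E]
    (hdim : 2 ≤ Module.finrank ℝ E)
    (η : E →ₗ[ℝ] E →ₗ[ℝ] ℝ)
    (hnondeg : ∀ u, (∀ v, η u v = 0) → u = 0)
    (Ω : E → ℝ) (hΩ : ContDiff ℝ 3 Ω)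
    (hhess : ∀ x : E, ∃ f : ℝ, ∀ u v : E,
      iteratedFDeriv ℝ 2 Ω x ![u, v] = f * η u v) :
    ∃ (a : ℝ) (b : E →ₗ[ℝ] ℝ) (c : ℝ), ∀ x : E, Ω x = a + b x + c * η x x := by
  obtain ⟨c, hc⟩ := exists_fderiv_fderiv_eq_const_mul hdim hnondeg hΩ
    (by simpa [iteratedFDeriv_two_apply] using hhess)
  have hconst : ∀ x, fderiv ℝ (fderiv ℝ Ω) x = fderiv ℝ (fderiv ℝ Ω) 0 := fun x => by
    ext u v
    rw [hc, hc]
  refine ⟨Ω 0, fderiv ℝ Ω 0, c / 2, fun x => ?_⟩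
  rw [eq_quadratic_of_fderiv_fderiv_eq_const (hΩ.of_le (by norm_num)) hconst x, hc]
  simp only [smul_eq_mul, ContinuousLinearMap.coe_coe]
  ring

/-- **General solution of the flat-space Einstein-scale equation.**
Let `E` be a finite-dimensional real vector space with `dim E ≥ 2` and `η` a
nondegenerate symmetric bilinear form on `E`.  If `Ω : E → ℝ` is `C³` and at
every point its Hessian is a scalar multiple of `η` (the trace-free part of the
Hessian vanishes, i.e. the flat-space conformally invariant equation
`(∇_μ∇_ν + Φ_{μν})₀ Ω = 0`), then there are `a ∈ ℝ`, a linear functional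
`b : E → ℝ` and `c ∈ ℝ` with `Ω x = a + b x + c • η(x,x)`, i.e.
`Ω = a + b_μ x^μ + c x²`. -/
theorem einstein_scale_general_solution
    {E : Type*} [NormedAddCommGroup E] [NormedSpace ℝ E]
    [FiniteDimensional ℝ E] (hdim : 2 ≤ Module.finrank ℝ E)
    (η : E →ₗ[ℝ] E →ₗ[ℝ] ℝ)
    (hsymm : ∀ u v, η u v = η v u)
    (hnondeg : ∀ u, (∀ v, η u v = 0) → u = 0)
    (Ω : E → ℝ) (hΩ : ContDiff ℝ 3 Ω)
    (hhess : ∀ x : E, ∃ f : ℝ, ∀ u v : E,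
      iteratedFDeriv ℝ 2 Ω x ![u, v] = f * η u v) :
    ∃ (a : ℝ) (b : E →ₗ[ℝ] ℝ) (c : ℝ), ∀ x : E, Ω x = a + b x + c * η x x :=
  einstein_scale_general_solution_general hdim η hnondeg Ω hΩ hhess
end

section
/- Assume momentum conservation: ∑_{j=1}^n (σ_j)_A W_j = 0 in ℂ⁴ for A = 0, 1 (equivalently ∑_j W_j ⊗ σ_j = 0). Then for every i and all α, β ∈ ℂ², ∑_{j=1}^n ℍ_{ij} (α σ_j)(β σ_j) = 0. Consequently, if the spinors σ_j represent at least three distinct points of ℂP¹, the Hodges matrix ℍ has rank at most n − 3. -/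
/-!
Write `F_i(α, β) = ∑_j ℍ_{ij} (α σ_j)(β σ_j)`, a symmetric bilinear form in the spinors `α, β`.
Off the diagonal, `ℍ_{ij} (σ_i σ_j) = −[W_i, W_j]`, and `[W_i, W_i] = 0` by skew-symmetry, so
`F_i(σ_i, β) = −[W_i, ∑_j (β σ_j) W_j] = 0` by momentum conservation; the diagonal entry is chosen
exactly so that `F_i(ξ, ξ) = 0`. Since `σ_i` and `ξ` span `ℂ²`, the form `F_i` vanishes.
Taking `α, β` among the standard spinors puts the three vectors `(σ_j)_A (σ_j)_B` in the kernel
of `ℍ`; at three distinct points of `ℂP¹` they form a Vandermonde-type matrix whose determinant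
is the product of the three brackets, so they are independent and `rank ℍ ≤ n − 3`.
-/

open Finset

section Twistor

variable {R ι κ : Type*} [CommRing R] [Fintype ι] [Fintype κ]

theorem sum_skew_mul_self_eq_zero [NoZeroDivisors R] [NeZero (2 : R)] (A : Matrix ι ι R)
    (hA : ∀ a b, A a b = -A b a) (V : ι → R) :
    ∑ I, ∑ J, A I J * V I * V J = 0 := by
  set S := ∑ I, ∑ J, A I J * V I * V J
  have hS : S = -S := by
    calc S = ∑ J, ∑ I, A I J * V I * V J := sum_comm
      _ = -S := by
        simp only [S, ← sum_neg_distrib]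
        exact sum_congr rfl fun J _ => sum_congr rfl fun I _ => by rw [hA]; ring
  have h2S : 2 * S = 0 := by linear_combination hS
  exact (mul_eq_zero.mp h2S).resolve_left two_ne_zero

theorem sum_bilinear_mul_eq_zero (A : Matrix ι ι R) (V : ι → R) (W : κ → ι → R) (c : κ → R)
    (hc : ∀ J, ∑ j, c j * W j J = 0) :
    ∑ j, (∑ I, ∑ J, A I J * V I * W j J) * c j = 0 := by
  calc ∑ j, (∑ I, ∑ J, A I J * V I * W j J) * c j
      = ∑ I, ∑ J, A I J * V I * ∑ j, c j * W j J := by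
        simp only [sum_mul, mul_sum]
        rw [sum_comm]
        exact sum_congr rfl fun I _ => by
          rw [sum_comm]; exact sum_congr rfl fun J _ => sum_congr rfl fun j _ => by ring
    _ = 0 := by simp [hc]

end Twistor

section Spinor

variable {K ι : Type*} [CommRing K] [Fintype ι]

def bracket (a b : Fin 2 → K) : K := a 0 * b 1 - a 1 * b 0

def spinorForm (σ : ι → Fin 2 → K) (h : ι → K) (α β : Fin 2 → K) : K :=
  ∑ j, h j * bracket α (σ j) * bracket β (σ j)

theorem bracket_self (a : Fin 2 → K) : bracket a a = 0 := by
  simp only [bracket]; ring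

theorem sum_bracket_mul_eq_zero (σ : ι → Fin 2 → K) (w : ι → K)
    (hw : ∀ a, ∑ j, σ j a * w j = 0) (β : Fin 2 → K) :
    ∑ j, bracket β (σ j) * w j = 0 := by
  calc ∑ j, bracket β (σ j) * w j = β 0 * ∑ j, σ j 1 * w j - β 1 * ∑ j, σ j 0 * w j := by
        simp only [bracket, mul_sum, ← sum_sub_distrib]
        exact sum_congr rfl fun j _ => by ring
    _ = 0 := by simp [hw]

theorem spinorForm_eq_zero [NoZeroDivisors K] {σ : ι → Fin 2 → K} {h : ι → K}
    {s ξ : Fin 2 → K} (hsξ : bracket ξ s ≠ 0) (hs : ∀ β, spinorForm σ h s β = 0)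
    (hξ : spinorForm σ h ξ ξ = 0) (α β : Fin 2 → K) :
    spinorForm σ h α β = 0 := by
  -- Schouten identity `(ξ s) γ = (ξ γ) s − (s γ) ξ`, applied to `γ = α` and `γ = β`.
  have expand : bracket ξ s ^ 2 * spinorForm σ h α β =
      bracket ξ α * bracket ξ β * spinorForm σ h s s
        - (bracket ξ α * bracket s β + bracket s α * bracket ξ β) * spinorForm σ h s ξ
        + bracket s α * bracket s β * spinorForm σ h ξ ξ := by
    simp only [spinorForm, mul_sum, ← sum_add_distrib, ← sum_sub_distrib]
    exact sum_congr rfl fun j _ => by simp only [bracket]; ring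
  rw [hs, hs, hξ] at expand
  simpa [hsξ] using expand

theorem sum_mul_mul_eq_zero_of_spinorForm {σ : ι → Fin 2 → K} {h : ι → K}
    (hF : ∀ α β, spinorForm σ h α β = 0) (a b : Fin 2) :
    ∑ j, h j * (σ j a * σ j b) = 0 := by
  let ε : Fin 2 → Fin 2 → K := ![![0, -1], ![1, 0]]
  have hε : ∀ a x, bracket (ε a) x = x a := by
    intro a x; fin_cases a <;> simp [ε, bracket]
  simpa [spinorForm, hε, mul_assoc] using hF (ε a) (ε b)

end Spinor

section Hodges

open Matrix

variable {K ι : Type*} [Field K]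

theorem spinorForm_self_left_eq_zero [Fintype ι] {σ : ι → Fin 2 → K} {h t : ι → K} {i : ι}
    (hσ : ∀ j, i ≠ j → bracket (σ i) (σ j) ≠ 0)
    (hoff : ∀ j, i ≠ j → h j = -t j / bracket (σ i) (σ j)) (hti : t i = 0)
    (hmom : ∀ β, ∑ j, t j * bracket β (σ j) = 0) (β : Fin 2 → K) :
    spinorForm σ h (σ i) β = 0 := by
  have hterm : ∀ j, h j * bracket (σ i) (σ j) * bracket β (σ j) = -(t j * bracket β (σ j)) := by
    intro j
    rcases eq_or_ne i j with rfl | hij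
    · simp [bracket_self, hti]
    · rw [hoff j hij, div_mul_cancel₀ _ (hσ j hij)]; ring
  simp only [spinorForm, hterm, sum_neg_distrib, hmom, neg_zero]

theorem sum_mul_self_mul_self_eq_zero [Fintype ι] [DecidableEq ι] {h w : ι → K} {i : ι}
    (hw : w i ≠ 0)
    (hdiag : h i = -∑ j ∈ univ.filter (fun j => j ≠ i), h j * w j ^ 2 / w i ^ 2) :
    ∑ j, h j * w j * w j = 0 := by
  calc ∑ j, h j * w j * w j = h i * w i ^ 2 + ∑ j ∈ univ.erase i, h j * w j ^ 2 := by
        rw [← add_sum_erase _ _ (mem_univ i)]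
        simp only [pow_two, mul_assoc]
    _ = 0 := by
        rw [hdiag, filter_ne', neg_mul, sum_mul]
        simp only [div_mul_cancel₀ _ (pow_ne_zero 2 hw), neg_add_cancel]

theorem rank_add_card_le_of_mulVec_eq_zero {m κ : Type*} [Fintype ι] [Finite m] [Fintype κ]
    (M : Matrix m ι K) {v : κ → ι → K} (hv : LinearIndependent K v) (hMv : ∀ k, M *ᵥ v k = 0) :
    M.rank + Fintype.card κ ≤ Fintype.card ι := by
  have hrank : (Matrix.of v)ᵀ.rank = Fintype.card κ := by
    rw [rank_transpose]; exact hv.rank_matrix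
  have hmul : M * (Matrix.of v)ᵀ = 0 := by
    ext i k; simpa [mul_apply, mulVec, dotProduct] using congrFun (hMv k) i
  simpa [hrank] using rank_add_rank_le_card_of_mul_eq_zero hmul

theorem linearIndependent_quadratic_monomials (σ : ι → Fin 2 → K) (p : Fin 3 → ι)
    (hp : ∀ k l, k < l → bracket (σ (p k)) (σ (p l)) ≠ 0) :
    LinearIndependent K
      ![fun j => σ j 0 * σ j 0, fun j => σ j 0 * σ j 1, fun j => σ j 1 * σ j 1] := by
  refine LinearIndependent.of_comp (LinearMap.funLeft K K p) ?_
  let M : Matrix (Fin 3) (Fin 3) K := fun a k =>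
    ![fun j => σ j 0 * σ j 0, fun j => σ j 0 * σ j 1, fun j => σ j 1 * σ j 1] a (p k)
  have hdet : M.det = bracket (σ (p 0)) (σ (p 1)) * bracket (σ (p 0)) (σ (p 2))
      * bracket (σ (p 1)) (σ (p 2)) := by
    rw [det_fin_three]
    simp [M, bracket]
    ring
  have hdet0 : M.det ≠ 0 := by
    rw [hdet]
    exact mul_ne_zero (mul_ne_zero (hp 0 1 (by decide)) (hp 0 2 (by decide))) (hp 1 2 (by decide))
  exact linearIndependent_rows_of_det_ne_zero hdet0

end Hodges

/-- **Kernel vectors and rank of the Hodges matrix under momentum conservation.**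
With `(a b) = a₀b₁ − a₁b₀`, spinors `σ₁,…,σₙ ∈ ℂ²` representing distinct points
of `ℂP¹` (`(σ_i σ_j) ≠ 0` for `i ≠ j`, and `n ≥ 3`), a reference spinor `ξ` with
`(ξ σ_i) ≠ 0`, dual twistors `W_i ∈ ℂ⁴`, a skew 4×4 matrix `A` with
`[V,W] = ∑ A_{IJ} V_I W_J`, and the Hodges matrix
`ℍ_{ij} = −[W_i,W_j]/(σ_i σ_j)` (`i ≠ j`),
`ℍ_{ii} = −∑_{j≠i} ℍ_{ij} (ξσ_j)²/(ξσ_i)²`: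
if momentum is conserved, `∑_j (σ_j)_A W_j = 0` for `A = 0,1`, then for every
`i` and all `α, β ∈ ℂ²` one has `∑_j ℍ_{ij} (ασ_j)(βσ_j) = 0`, and consequently
`ℍ` has rank at most `n − 3`. -/
theorem hodges_matrix_kernel_and_rank
    (n : ℕ) (hn : 3 ≤ n)
    (σ : Fin n → Fin 2 → ℂ) (ξ : Fin 2 → ℂ)
    (W : Fin n → Fin 4 → ℂ)
    (A : Matrix (Fin 4) (Fin 4) ℂ) (hA : ∀ a b, A a b = - A b a)
    (br : (Fin 2 → ℂ) → (Fin 2 → ℂ) → ℂ)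
    (hbr : ∀ a b, br a b = a 0 * b 1 - a 1 * b 0)
    (tw : (Fin 4 → ℂ) → (Fin 4 → ℂ) → ℂ)
    (htw : ∀ V W', tw V W' = ∑ I : Fin 4, ∑ J : Fin 4, A I J * V I * W' J)
    (hσ : ∀ i j, i ≠ j → br (σ i) (σ j) ≠ 0)
    (hξ : ∀ i, br ξ (σ i) ≠ 0)
    (H : Matrix (Fin n) (Fin n) ℂ)
    (hHoff : ∀ i j, i ≠ j → H i j = -(tw (W i) (W j)) / br (σ i) (σ j))
    (hHdiag : ∀ i, H i i =
      -∑ j ∈ Finset.univ.filter (fun j => j ≠ i),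
        H i j * (br ξ (σ j)) ^ 2 / (br ξ (σ i)) ^ 2)
    (hmom : ∀ a : Fin 2, ∀ I : Fin 4, ∑ j, σ j a * W j I = 0) :
    (∀ i : Fin n, ∀ α β : Fin 2 → ℂ,
        ∑ j, H i j * br α (σ j) * br β (σ j) = 0) ∧
      H.rank ≤ n - 3 := by
  obtain rfl : br = bracket := funext₂ hbr
  obtain rfl : tw = fun V W' => ∑ I : Fin 4, ∑ J : Fin 4, A I J * V I * W' J := funext₂ htw
  have hF : ∀ i α β, spinorForm σ (H i) α β = 0 := by
    intro i
    refine spinorForm_eq_zero (hξ i) ?_ (sum_mul_self_mul_self_eq_zero (hξ i) (hHdiag i))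
    refine spinorForm_self_left_eq_zero (hσ i) (hHoff i)
      (sum_skew_mul_self_eq_zero A hA (W i)) fun β => ?_
    exact sum_bilinear_mul_eq_zero A (W i) W _ fun J =>
      sum_bracket_mul_eq_zero σ (W · J) (hmom · J) β
  refine ⟨hF, ?_⟩
  have hker : ∀ a b : Fin 2, H.mulVec (fun j => σ j a * σ j b) = 0 := fun a b =>
    funext fun i => sum_mul_mul_eq_zero_of_spinorForm (hF i) a b
  have hrank := rank_add_card_le_of_mulVec_eq_zero H
    (linearIndependent_quadratic_monomials σ (Fin.castLE hn) fun k l hkl =>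
      hσ _ _ ((Fin.castLE_injective hn).ne hkl.ne))
    (by intro k; fin_cases k <;> exact hker _ _)
  simp only [Fintype.card_fin] at hrank
  omega
end

section
/- Fix i and regard the diagonal Hodges entry as a function of the reference spinor, ℍ_{ii}(ξ) = ∑_{j ≠ i} [W_i, W_j](ξ σ_j)²/((σ_i σ_j)(ξ σ_i)²), defined on the open set {ξ ∈ ℂ² : (ξ σ_i) ≠ 0}. Then its holomorphic gradient in ξ is ∇_ξ ℍ_{ii}(ξ) = (2/(ξ σ_i)³) · [W_i, ∑_{j=1}^n (ξ σ_j) W_j] · (−ξ₁, ξ₀). No momentum conservation is assumed; this is the variation formula for d_ξℍ_{ii} used to prove ξ-independence of the MHV amplitude formula. -/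
/-!
Each summand `c_j (ζσ_j)² / ((σ_iσ_j)(ζσ_i)²)` is a quotient of squares of linear forms in `ζ`.
The quotient rule leaves the factor `(vσ_j)(ξσ_i) − (ξσ_j)(vσ_i)`, which the Schouten identity
rewrites as `(ξv)(σ_iσ_j)`, cancelling the constant `(σ_iσ_j)` of the denominator. The missing
term `j = i` may then be added to the sum since `[W_i, W_i] = 0` for skew `A`, and bilinearity
of the bracket collects the sum into `[W_i, ∑_j (ξσ_j) W_j]`.
-/

open Finset ContinuousLinearMap

/-- The spinor bracket `(a b)`. -/
def ang {R : Type*} [CommRing R] (a b : Fin 2 → R) : R := a 0 * b 1 - a 1 * b 0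

theorem ang_swap {R : Type*} [CommRing R] (a b : Fin 2 → R) : ang a b = -ang b a := by
  unfold ang; ring

theorem ang_schouten {R : Type*} [CommRing R] (a b c d : Fin 2 → R) :
    ang a b * ang c d - ang c b * ang a d = ang c a * ang d b := by
  unfold ang; ring

theorem sum_sum_mul_self_eq_zero_of_skew {R ι : Type*} [CommRing R] [NoZeroDivisors R]
    [CharZero R] [Fintype ι] {A : Matrix ι ι R} (hA : ∀ a b, A a b = -A b a) (V : ι → R) :
    ∑ I, ∑ J, A I J * V I * V J = 0 := by
  have h : ∑ I, ∑ J, A I J * V I * V J = -∑ I, ∑ J, A I J * V I * V J := by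
    conv_lhs => rw [sum_comm]
    simp only [← sum_neg_distrib]
    refine sum_congr rfl fun I _ => sum_congr rfl fun J _ => ?_
    rw [hA J I]; ring
  exact add_self_eq_zero.mp (eq_neg_iff_add_eq_zero.mp h)

theorem sum_sum_mul_sum_mul {R ι κ : Type*} [CommSemiring R] [Fintype ι] (A : Matrix ι ι R)
    (V : ι → R) (s : Finset κ) (a : κ → R) (W : κ → ι → R) :
    ∑ I, ∑ J, A I J * V I * ∑ j ∈ s, a j * W j J =
      ∑ j ∈ s, a j * ∑ I, ∑ J, A I J * V I * W j J := by
  simp only [mul_sum]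
  rw [sum_comm (s := s)]
  refine sum_congr rfl fun I _ => ?_
  rw [sum_comm (s := s)]
  exact sum_congr rfl fun J _ => sum_congr rfl fun j _ => by ring

variable {𝕜 : Type*} [NontriviallyNormedField 𝕜]

def angCLM (a : Fin 2 → 𝕜) : (Fin 2 → 𝕜) →L[𝕜] 𝕜 := a 0 • proj 1 - a 1 • proj 0

@[simp]
theorem angCLM_apply (a v : Fin 2 → 𝕜) : angCLM a v = ang a v := by
  simp [angCLM, ang]

theorem hasFDerivAt_ang_left (b ξ : Fin 2 → 𝕜) :
    HasFDerivAt (fun ζ => ang ζ b) (-angCLM b) ξ := by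
  have h : (fun ζ => ang ζ b) = fun ζ => -angCLM b ζ := by
    funext ζ; rw [angCLM_apply, ang_swap]
  rw [h]
  exact (angCLM b).hasFDerivAt.neg

theorem hasFDerivAt_hodges_term {s b ξ : Fin 2 → 𝕜} (c : 𝕜) (hsb : ang s b ≠ 0)
    (hξ : ang ξ s ≠ 0) :
    HasFDerivAt (fun ζ => c * ang ζ b ^ 2 / (ang s b * ang ζ s ^ 2))
      ((2 * c * ang ξ b / ang ξ s ^ 3) • angCLM ξ) ξ := by
  have hnum := ((hasFDerivAt_ang_left b ξ).pow 2).const_mul c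
  have hden := ((hasFDerivAt_ang_left s ξ).pow 2).const_mul (ang s b)
  have hinv := (hasDerivAt_inv (mul_ne_zero hsb (pow_ne_zero 2 hξ))).comp_hasFDerivAt ξ hden
  refine ((hnum.mul hinv).congr_of_eventuallyEq
    (.of_eq (funext fun ζ => div_eq_mul_inv _ _))).congr_fderiv ?_
  ext v
  simp only [add_apply, smul_apply, neg_apply, angCLM_apply, smul_eq_mul, nsmul_eq_mul,
    Function.comp_apply, Nat.cast_ofNat, Nat.reduceSub, pow_one]
  rw [ang_swap b v, ang_swap s v]
  field_simp
  linear_combination (2 * c * ang ξ b) * ang_schouten v b ξ s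

/-- **Variation of the diagonal Hodges entry with the reference spinor.**
With `(a b) = a₀b₁ − a₁b₀`, spinors `σ₁,…,σₙ ∈ ℂ²` with `(σ_i σ_j) ≠ 0` for
`i ≠ j`, dual twistors `W_j ∈ ℂ⁴` and a skew 4×4 matrix `A` with
`[V,W] = ∑ A_{IJ} V_I W_J`, consider the diagonal Hodges entry as a function of
the reference spinor,
`ℍ_{ii}(ξ) = ∑_{j≠i} [W_i,W_j](ξσ_j)² / ((σ_iσ_j)(ξσ_i)²)`,
on `{ξ : (ξσ_i) ≠ 0}`.  Its holomorphic gradient in `ξ` is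
`∇_ξ ℍ_{ii}(ξ) = (2/(ξσ_i)³)·[W_i, ∑_j (ξσ_j) W_j]·(−ξ₁, ξ₀)`,
i.e. the derivative in direction `v` is `(2/(ξσ_i)³)[W_i,∑_j (ξσ_j)W_j]·(ξ v)`.
No momentum conservation is assumed. -/
theorem dxi_diagonal_hodges_entry
    (n : ℕ) (σ : Fin n → Fin 2 → ℂ)
    (W : Fin n → Fin 4 → ℂ)
    (A : Matrix (Fin 4) (Fin 4) ℂ) (hA : ∀ a b, A a b = - A b a)
    (hσ : ∀ i j, i ≠ j → (σ i 0 * σ j 1 - σ i 1 * σ j 0) ≠ 0)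
    (i : Fin n)
    (ξ : Fin 2 → ℂ) (hξ : ξ 0 * σ i 1 - ξ 1 * σ i 0 ≠ 0) :
    HasFDerivAt
      (fun ζ : Fin 2 → ℂ =>
        ∑ j ∈ Finset.univ.filter (fun j => j ≠ i),
          (∑ I : Fin 4, ∑ J : Fin 4, A I J * W i I * W j J) *
              (ζ 0 * σ j 1 - ζ 1 * σ j 0) ^ 2 /
            ((σ i 0 * σ j 1 - σ i 1 * σ j 0) *
              (ζ 0 * σ i 1 - ζ 1 * σ i 0) ^ 2))
      ((2 / (ξ 0 * σ i 1 - ξ 1 * σ i 0) ^ 3 *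
          (∑ I : Fin 4, ∑ J : Fin 4, A I J * W i I *
            (∑ j, (ξ 0 * σ j 1 - ξ 1 * σ j 0) * W j J))) •
        (ξ 0 • (ContinuousLinearMap.proj 1 : (Fin 2 → ℂ) →L[ℂ] ℂ)
          - ξ 1 • (ContinuousLinearMap.proj 0 : (Fin 2 → ℂ) →L[ℂ] ℂ)))
      ξ := by
  set c : Fin n → ℂ := fun j => ∑ I : Fin 4, ∑ J : Fin 4, A I J * W i I * W j J
  have hci : c i = 0 := sum_sum_mul_self_eq_zero_of_skew hA (W i)
  have hterms := HasFDerivAt.fun_sum fun j (hj : j ∈ univ.filter (· ≠ i)) =>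
    hasFDerivAt_hodges_term (c j) (hσ i j (mem_filter.1 hj).2.symm) hξ
  refine hterms.congr_fderiv ?_
  change _ = (2 / ang ξ (σ i) ^ 3 *
    ∑ I, ∑ J, A I J * W i I * ∑ j, ang ξ (σ j) * W j J) • angCLM ξ
  rw [← Finset.sum_smul, sum_sum_mul_sum_mul, filter_ne', sum_erase _ (by simp [hci]), mul_sum]
  congr 1
  exact sum_congr rfl fun j _ => by ring
end

section
/- If momentum conservation holds, ∑_{j=1}^n (σ_j)_A W_j = 0 in ℂ⁴ for A = 0, 1, then each diagonal Hodges entry is independent of the reference spinor: for all ξ, ξ' ∈ ℂ² with (ξ σ_i) ≠ 0 and (ξ' σ_i) ≠ 0, one has ∑_{j ≠ i} [W_i,W_j](ξ σ_j)²/((σ_i σ_j)(ξ σ_i)²) = ∑_{j ≠ i} [W_i,W_j](ξ' σ_j)²/((σ_i σ_j)(ξ' σ_i)²). -/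
/-!
Write `ℍ_{ii}(ξ) = ∑_{j ≠ i} t_j (ξσ_j)² / ((σ_iσ_j)(ξσ_i)²)` with `t_j = [W_i, W_j]`.
By the Schouten identity `(ξσ_j)(ξ'σ_i) − (ξ'σ_j)(ξσ_i) = −(ξξ')(σ_iσ_j)`, the factor
`(σ_iσ_j)` cancels from each term of `ℍ_{ii}(ξ) − ℍ_{ii}(ξ')`, which becomes a combination of
`∑_{j ≠ i} t_j (ξσ_j)` and `∑_{j ≠ i} t_j (ξ'σ_j)`. Both vanish: `[W_i, W_i] = 0` by skewness,
and `∑_j t_j (ησ_j) = [W_i, ∑_j (ησ_j) W_j] = 0` by momentum conservation.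
-/

open Finset Matrix

section SpinorBracket

variable {R : Type*} [CommRing R]

def spinorBracket (a b : Fin 2 → R) : R := a 0 * b 1 - a 1 * b 0

theorem spinorBracket_schouten (ξ ξ' τ σ : Fin 2 → R) :
    spinorBracket ξ σ * spinorBracket ξ' τ - spinorBracket ξ' σ * spinorBracket ξ τ =
      -(spinorBracket ξ ξ' * spinorBracket τ σ) := by
  unfold spinorBracket; ring

theorem sum_spinorBracket_smul_eq_zero {ι M : Type*} [AddCommGroup M] [Module R M]
    (s : Finset ι) (σ : ι → Fin 2 → R) (W : ι → M) (hmom : ∀ a, ∑ j ∈ s, σ j a • W j = 0)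
    (η : Fin 2 → R) : ∑ j ∈ s, spinorBracket η (σ j) • W j = 0 := by
  simp only [spinorBracket, sub_smul, mul_smul, sum_sub_distrib, ← smul_sum, hmom, smul_zero,
    sub_self]

end SpinorBracket

theorem dotProduct_mulVec_self_eq_zero {κ R : Type*} [Fintype κ] [CommRing R] [NoZeroDivisors R]
    [CharZero R] {A : Matrix κ κ R} (hA : Aᵀ = -A) (v : κ → R) : v ⬝ᵥ (A *ᵥ v) = 0 :=
  self_eq_neg.mp <| calc
    v ⬝ᵥ (A *ᵥ v) = (v ᵥ* Aᵀ) ⬝ᵥ v := by rw [vecMul_transpose, dotProduct_comm]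
    _ = v ⬝ᵥ (Aᵀ *ᵥ v) := (dotProduct_mulVec _ _ _).symm
    _ = -(v ⬝ᵥ (A *ᵥ v)) := by rw [hA, neg_mulVec, dotProduct_neg]

section Hodges

variable {K : Type*} [Field K]

theorem div_spinorBracket_sq_sub_div_spinorBracket_sq {ξ ξ' τ σ : Fin 2 → K}
    (hξ : spinorBracket ξ τ ≠ 0) (hξ' : spinorBracket ξ' τ ≠ 0) (hτσ : spinorBracket τ σ ≠ 0)
    (t : K) :
    t * spinorBracket ξ σ ^ 2 / (spinorBracket τ σ * spinorBracket ξ τ ^ 2) -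
        t * spinorBracket ξ' σ ^ 2 / (spinorBracket τ σ * spinorBracket ξ' τ ^ 2) =
      -spinorBracket ξ ξ' / (spinorBracket ξ τ ^ 2 * spinorBracket ξ' τ ^ 2) *
        (spinorBracket ξ' τ * (t * spinorBracket ξ σ) +
          spinorBracket ξ τ * (t * spinorBracket ξ' σ)) := by
  rw [div_sub_div _ _ (by positivity) (by positivity), div_mul_eq_mul_div,
    div_eq_div_iff (by positivity) (by positivity)]
  linear_combination t * spinorBracket τ σ * spinorBracket ξ τ ^ 2 * spinorBracket ξ' τ ^ 2 *
      (spinorBracket ξ σ * spinorBracket ξ' τ + spinorBracket ξ' σ * spinorBracket ξ τ) *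
      spinorBracket_schouten ξ ξ' τ σ

theorem sum_div_spinorBracket_sq_eq {ι : Type*} {s : Finset ι} {t : ι → K}
    {σ : ι → Fin 2 → K} {τ : Fin 2 → K} (hτ : ∀ j ∈ s, spinorBracket τ (σ j) ≠ 0)
    (ht : ∀ η, ∑ j ∈ s, t j * spinorBracket η (σ j) = 0) {ξ ξ' : Fin 2 → K}
    (hξ : spinorBracket ξ τ ≠ 0) (hξ' : spinorBracket ξ' τ ≠ 0) :
    ∑ j ∈ s, t j * spinorBracket ξ (σ j) ^ 2 / (spinorBracket τ (σ j) * spinorBracket ξ τ ^ 2) =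
      ∑ j ∈ s, t j * spinorBracket ξ' (σ j) ^ 2 /
        (spinorBracket τ (σ j) * spinorBracket ξ' τ ^ 2) := by
  rw [← sub_eq_zero, ← sum_sub_distrib,
    sum_congr rfl fun j hj => div_spinorBracket_sq_sub_div_spinorBracket_sq hξ hξ' (hτ j hj) (t j),
    ← mul_sum, sum_add_distrib, ← mul_sum, ← mul_sum, ht, ht]
  simp

end Hodges

theorem diagonal_hodges_entry_xi_independent_general
    (n : ℕ)
    (σ : Fin n → Fin 2 → ℂ) (W : Fin n → Fin 4 → ℂ)
    (A : Matrix (Fin 4) (Fin 4) ℂ) (hA : ∀ a b, A a b = - A b a)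
    (br : (Fin 2 → ℂ) → (Fin 2 → ℂ) → ℂ)
    (hbr : ∀ a b, br a b = a 0 * b 1 - a 1 * b 0)
    (tw : (Fin 4 → ℂ) → (Fin 4 → ℂ) → ℂ)
    (htw : ∀ V W', tw V W' = ∑ I : Fin 4, ∑ J : Fin 4, A I J * V I * W' J)
    (hσ : ∀ i j, i ≠ j → br (σ i) (σ j) ≠ 0)
    (hmom : ∀ a : Fin 2, ∀ I : Fin 4, ∑ j, σ j a * W j I = 0)
    (i : Fin n) (ξ ξ' : Fin 2 → ℂ)
    (hξ : br ξ (σ i) ≠ 0) (hξ' : br ξ' (σ i) ≠ 0) :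
    ∑ j ∈ Finset.univ.filter (fun j => j ≠ i),
        tw (W i) (W j) * (br ξ (σ j)) ^ 2 /
          (br (σ i) (σ j) * (br ξ (σ i)) ^ 2) =
      ∑ j ∈ Finset.univ.filter (fun j => j ≠ i),
        tw (W i) (W j) * (br ξ' (σ j)) ^ 2 /
          (br (σ i) (σ j) * (br ξ' (σ i)) ^ 2) := by
  obtain rfl : br = spinorBracket := funext₂ hbr
  have htw' : ∀ V, tw V = toLinearMap₂' ℂ A V := fun V => funext fun W' => by
    rw [htw, toLinearMap₂'_apply]
    exact sum_congr rfl fun _ _ => sum_congr rfl fun _ _ => by simp only [smul_eq_mul]; ring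
  have hdiag : tw (W i) (W i) = 0 := by
    rw [htw', toLinearMap₂'_apply']
    exact dotProduct_mulVec_self_eq_zero (by ext a b; exact hA b a) (W i)
  refine sum_div_spinorBracket_sq_eq (fun j hj => hσ i j (mem_filter.mp hj).2.symm)
    (fun η => ?_) hξ hξ'
  have hcontract : ∑ j, tw (W i) (W j) * spinorBracket η (σ j) = 0 := by
    have hmom' : ∀ a, ∑ j, σ j a • W j = 0 := fun a => funext fun I => by
      simpa only [Finset.sum_apply, Pi.smul_apply, smul_eq_mul, Pi.zero_apply] using hmom a I
    simp_rw [htw', mul_comm _ (spinorBracket η _), ← smul_eq_mul, ← map_smul, ← map_sum,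
      sum_spinorBracket_smul_eq_zero univ σ W hmom' η, map_zero]
  rwa [filter_ne', sum_erase_eq_sub (mem_univ i), hdiag, zero_mul, sub_zero]

/-- **ξ-independence of the diagonal Hodges entries under momentum conservation.**
With `(a b) = a₀b₁ − a₁b₀`, `n ≥ 2`, spinors `σ_j ∈ ℂ²` with `(σ_i σ_j) ≠ 0`
for `i ≠ j`, dual twistors `W_j ∈ ℂ⁴`, a skew 4×4 matrix `A` with
`[V,W] = ∑ A_{IJ} V_I W_J`, and the diagonal Hodges entry
`ℍ_{ii}(ξ) = ∑_{j≠i} [W_i,W_j](ξσ_j)² / ((σ_iσ_j)(ξσ_i)²)`: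
if momentum is conserved, `∑_j (σ_j)_A W_j = 0` for `A = 0,1`, then
`ℍ_{ii}(ξ) = ℍ_{ii}(ξ')` for any reference spinors `ξ, ξ'` with
`(ξ σ_i) ≠ 0 ≠ (ξ' σ_i)`. -/
theorem diagonal_hodges_entry_xi_independent
    (n : ℕ) (hn : 2 ≤ n)
    (σ : Fin n → Fin 2 → ℂ) (W : Fin n → Fin 4 → ℂ)
    (A : Matrix (Fin 4) (Fin 4) ℂ) (hA : ∀ a b, A a b = - A b a)
    (br : (Fin 2 → ℂ) → (Fin 2 → ℂ) → ℂ)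
    (hbr : ∀ a b, br a b = a 0 * b 1 - a 1 * b 0)
    (tw : (Fin 4 → ℂ) → (Fin 4 → ℂ) → ℂ)
    (htw : ∀ V W', tw V W' = ∑ I : Fin 4, ∑ J : Fin 4, A I J * V I * W' J)
    (hσ : ∀ i j, i ≠ j → br (σ i) (σ j) ≠ 0)
    (hmom : ∀ a : Fin 2, ∀ I : Fin 4, ∑ j, σ j a * W j I = 0)
    (i : Fin n) (ξ ξ' : Fin 2 → ℂ)
    (hξ : br ξ (σ i) ≠ 0) (hξ' : br ξ' (σ i) ≠ 0) :
    ∑ j ∈ Finset.univ.filter (fun j => j ≠ i),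
        tw (W i) (W j) * (br ξ (σ j)) ^ 2 /
          (br (σ i) (σ j) * (br ξ (σ i)) ^ 2) =
      ∑ j ∈ Finset.univ.filter (fun j => j ≠ i),
        tw (W i) (W j) * (br ξ' (σ j)) ^ 2 /
          (br (σ i) (σ j) * (br ξ' (σ i)) ^ 2) :=
  diagonal_hodges_entry_xi_independent_general n σ W A hA br hbr tw htw hσ hmom i ξ ξ' hξ hξ'
end

section
/- Let n ≥ 3 and let M be a symmetric n×n complex matrix, and let v¹, v², v³ ∈ ℂⁿ be linearly independent vectors with M v^k = 0 for k = 1, 2, 3. For a 3-element subset S ⊆ {1,…,n}, let |M^S_S| denote the determinant of the matrix obtained from M by deleting the rows and columns indexed by S, and let V_S be the 3×3 matrix whose (k, s) entry is v^k_s for s ∈ S. Then for any two 3-element subsets S and T: |M^S_S| · (det V_T)² = |M^T_T| · (det V_S)². (This invariance of the reduced determinant, applied to the Hodges matrix ℍ — which has three independent kernel vectors on the support of momentum conservation — is what makes all the thrice-reduced determinant terms in the flat-space limit equivalent and yields Hodges' MHV formula.) -/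
/-!
Write `D g` for the determinant of the values of the kernel vectors at the points `g`.
Replacing the `i`-th point by a variable `x`, multilinearity makes `x ↦ D (update g i x)` a
kernel vector of `M` vanishing at the other two points, hence a kernel vector `w` of the symmetric
matrix `K` obtained by deleting them. The adjugate of `K` is `c • w wᵀ` (its columns lie in
`ker K`, a line as soon as `adj K ≠ 0`), and its diagonal entries are the thrice-reduced minors of
`M`; so `|M^S_S| = c D_S²` for all `S` through the two fixed points. Basis exchange connects any
two `S`, `T` with `D_S, D_T ≠ 0` by such moves, and if `D_S = 0` some combination of the `vᵏ`
vanishing on `S` is a kernel vector of `M^S_S`, forcing `|M^S_S| = 0`.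
-/

open Matrix Finset Function

namespace Matrix

variable {ι R K : Type*} [Fintype ι] [DecidableEq ι] [CommRing R] [Field K]

theorem adjugate_apply_self (A : Matrix ι ι R) (a : ι) :
    A.adjugate a a = (A.submatrix (Subtype.val : {x // x ≠ a} → ι) Subtype.val).det := by
  let e : {x // x ≠ a} ⊕ {x // ¬x ≠ a} ≃ ι := Equiv.sumCompl _
  have : Unique {x // ¬x ≠ a} := ⟨⟨⟨a, not_not.2 rfl⟩⟩, fun ⟨x, hx⟩ => Subtype.ext (not_not.1 hx)⟩
  rw [adjugate_apply, ← det_submatrix_equiv_self e]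
  have hblock : (A.updateRow a (Pi.single a 1)).submatrix e e =
      fromBlocks (A.submatrix Subtype.val Subtype.val)
        (of fun (i : {x // x ≠ a}) (_ : {x // ¬x ≠ a}) => A i a) 0 1 := by
    ext (i | i) (j | j)
    · simp [e, updateRow_ne i.2]
    · simp [e, updateRow_ne i.2, not_not.1 j.2]
    · simp [e, not_not.1 i.2, j.2]
    · simp [e, not_not.1 j.2, Subsingleton.elim i j]
  rw [hblock, det_fromBlocks_zero₂₁, det_one, mul_one]

theorem rank_updateRow_le (A : Matrix ι ι K) (j : ι) (b : ι → K) :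
    (A.updateRow j b).rank ≤ A.rank + 1 := by
  have hrows : Submodule.span K (Set.range (A.updateRow j b).row) ≤
      Submodule.span K (Set.range A.row) ⊔ Submodule.span K {b} := by
    rw [Submodule.span_le]
    rintro _ ⟨i, rfl⟩
    by_cases hi : i = j
    · subst hi
      exact Submodule.mem_sup_right (by simp [row, Submodule.mem_span_singleton_self])
    · exact Submodule.mem_sup_left (Submodule.subset_span ⟨i, by simp [row, hi]⟩)
  rw [rank_eq_finrank_span_row, rank_eq_finrank_span_row]
  calc _ ≤ _ := Submodule.finrank_mono hrows
    _ ≤ _ := Submodule.finrank_add_le_finrank_add_finrank _ _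
    _ ≤ _ := by
      gcongr
      simpa using finrank_span_le_card (R := K) ({b} : Set (ι → K))

theorem card_le_rank_add_one_of_adjugate_ne_zero {A : Matrix ι ι K} (h : A.adjugate ≠ 0) :
    Fintype.card ι ≤ A.rank + 1 := by
  obtain ⟨i, j, hij⟩ : ∃ i j, A.adjugate i j ≠ 0 := by
    by_contra! h'
    exact h (Matrix.ext h')
  rw [adjugate_apply] at hij
  rw [← rank_of_det_ne_zero hij]
  exact rank_updateRow_le A j _

theorem IsSymm.exists_adjugate_eq_smul_vecMulVec {A : Matrix ι ι K} (hA : A.IsSymm)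
    {w : ι → K} (hw : A *ᵥ w = 0) (hw0 : w ≠ 0) : ∃ c : K, A.adjugate = c • vecMulVec w w := by
  by_cases hadj : A.adjugate = 0
  · exact ⟨0, by simp [hadj]⟩
  have hdet : A.det = 0 := exists_mulVec_eq_zero_iff.mp ⟨w, hw0, hw⟩
  have hker : LinearMap.ker A.mulVecLin = K ∙ w := by
    refine (Submodule.eq_of_le_of_finrank_le ?_ ?_).symm
    · rwa [Submodule.span_singleton_le_iff_mem]
    · have := LinearMap.finrank_range_add_finrank_ker A.mulVecLin
      have := card_le_rank_add_one_of_adjugate_ne_zero hadj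
      rw [finrank_span_singleton hw0]
      simp only [rank, Module.finrank_fintype_fun_eq_card] at *
      omega
  have hcol (j : ι) : ∃ μ : K, μ • w = A.adjugate *ᵥ Pi.single j 1 := by
    rw [← Submodule.mem_span_singleton, ← hker, LinearMap.mem_ker, mulVecLin_apply, mulVec_mulVec,
      mul_adjugate, hdet, zero_smul, zero_mulVec]
  choose μ hμ using hcol
  obtain ⟨i₀, hi₀⟩ : ∃ i, w i ≠ 0 := Function.ne_iff.mp hw0
  refine ⟨μ i₀ / w i₀, ?_⟩
  have hentry (i j : ι) : A.adjugate i j = μ j * w i := by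
    simpa [mulVec_single_one] using (congrFun (hμ j) i).symm
  ext i j
  have : μ j * w i₀ = μ i₀ * w j := by rw [← hentry, hA.adjugate.apply, hentry]
  rw [hentry, smul_apply, vecMulVec_apply, smul_eq_mul]
  field_simp
  linear_combination w i * this

def reducedDet (M : Matrix ι ι R) (S : Finset ι) : R :=
  (M.submatrix (Subtype.val : {x // x ∉ S} → ι) Subtype.val).det

theorem adjugate_submatrix_compl_apply_self (M : Matrix ι ι R) {S : Finset ι} {a : ι}
    (ha : a ∉ S) :
    (M.submatrix (Subtype.val : {x // x ∉ S} → ι) Subtype.val).adjugate ⟨a, ha⟩ ⟨a, ha⟩ =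
      M.reducedDet (insert a S) := by
  let e : {y : {x // x ∉ S} // y ≠ ⟨a, ha⟩} ≃ {x // x ∉ insert a S} :=
    (Equiv.subtypeEquivRight fun y => by simp [Subtype.ext_iff, y.2]).trans
      (Equiv.subtypeSubtypeEquivSubtype fun hx => by simp_all)
  rw [adjugate_apply_self, reducedDet, ← det_submatrix_equiv_self e]
  rfl

theorem mulVec_submatrix_compl_eq_zero {M : Matrix ι ι R} {u : ι → R} (hu : M *ᵥ u = 0)
    {S : Finset ι} (huS : ∀ x ∈ S, u x = 0) :
    M.submatrix (Subtype.val : {x // x ∉ S} → ι) Subtype.val *ᵥ (fun x : {x // x ∉ S} => u x) =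
      0 := by
  ext i
  have h := congrFun hu i
  rw [mulVec, dotProduct, ← Fintype.sum_subtype_add_sum_subtype (· ∉ S)] at h
  have hS : ∑ x : {x // ¬x ∉ S}, M i x * u x = 0 :=
    Finset.sum_eq_zero fun x _ => by rw [huS x (not_not.1 x.2), mul_zero]
  simpa [hS, mulVec, dotProduct] using h

theorem reducedDet_eq_zero_of_mulVec_eq_zero [IsDomain R] {M : Matrix ι ι R} {u : ι → R}
    (hu : M *ᵥ u = 0) (hu0 : u ≠ 0) {S : Finset ι} (huS : ∀ x ∈ S, u x = 0) :
    M.reducedDet S = 0 := by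
  obtain ⟨x, hx⟩ : ∃ x, u x ≠ 0 := Function.ne_iff.mp hu0
  have hxS : x ∉ S := fun h => hx (huS x h)
  exact exists_mulVec_eq_zero_iff.mp
    ⟨_, fun h => hx (congrFun h ⟨x, hxS⟩), mulVec_submatrix_compl_eq_zero hu huS⟩

end Matrix

theorem Finset.image_univ_update {ι κ : Type*} [DecidableEq ι] [Fintype κ] [DecidableEq κ]
    (g : κ → ι) (i : κ) (x : ι) :
    univ.image (update g i x) = insert x ((univ.erase i).image g) := by
  ext y
  simp only [mem_image, mem_univ, true_and, mem_insert, mem_erase]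
  constructor
  · rintro ⟨j, rfl⟩
    by_cases hj : j = i
    · simp [hj]
    · exact Or.inr ⟨j, ⟨hj, trivial⟩, (update_of_ne hj ..).symm⟩
  · rintro (rfl | ⟨j, ⟨hj, -⟩, rfl⟩)
    · exact ⟨i, update_self ..⟩
    · exact ⟨j, update_of_ne hj ..⟩

section colDet

variable {ι κ R : Type*} [Fintype κ] [DecidableEq κ] [CommRing R]

/-- `colDet v g` is the paper's `det V_S` for the enumeration `g` of `S`. -/
def colDet (v : κ → ι → R) (g : κ → ι) : R :=
  (of fun k l => v k (g l)).det

variable (v : κ → ι → R) (g : κ → ι)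

theorem colDet_update (i : κ) (x : ι) :
    colDet v (update g i x) = ∑ k, (of fun k l => v k (g l)).adjugate i k * v k x := by
  have hcol : (of fun k l => v k (update g i x l)) =
      (of fun k l => v k (g l)).updateCol i fun k => v k x := by
    ext k l
    by_cases h : l = i <;> simp [h]
  rw [colDet, hcol, ← cramer_apply, cramer_eq_adjugate_mulVec]
  rfl

theorem colDet_update_apply_of_ne {i j : κ} (h : j ≠ i) : colDet v (update g i (g j)) = 0 :=
  det_zero_of_column_eq h fun k => by simp [update_of_ne h]

variable {v g}

theorem injective_of_colDet_ne_zero (h : colDet v g ≠ 0) : Injective g := by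
  intro i j hij
  by_contra hne
  exact h (det_zero_of_column_eq hne fun k => by simp [hij])

theorem mulVec_colDet_update_eq_zero [Fintype ι] {M : Matrix ι ι R} (hker : ∀ k, M *ᵥ v k = 0)
    (i : κ) : M *ᵥ (fun x => colDet v (update g i x)) = 0 := by
  have hcomb : (fun x => colDet v (update g i x)) =
      ∑ k, (of fun k l => v k (g l)).adjugate i k • v k := by
    ext x
    simp [colDet_update, Finset.sum_apply]
  simp [hcomb, mulVec_sum, mulVec_smul, hker]

theorem exists_colDet_update_ne_zero [IsDomain R] {h : κ → ι} (hg : colDet v g ≠ 0)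
    (hh : colDet v h ≠ 0) (i : κ) : ∃ l, colDet v (update g i (h l)) ≠ 0 := by
  by_contra! hzero
  have hrow : (of fun k l => v k (g l)).adjugate i = 0 := by
    by_contra hrow
    refine hh (exists_vecMul_eq_zero_iff.mp ⟨_, hrow, ?_⟩)
    ext l
    simpa [vecMul, dotProduct, colDet_update] using hzero l
  apply hg
  rw [← update_eq_self i g, colDet_update]
  simp [hrow]

theorem colDet_sq_eq_det_gram [DecidableEq ι] (hg : Injective g) :
    colDet v g ^ 2 = (of fun k k' => ∑ x ∈ univ.image g, v k x * v k' x).det := by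
  rw [sq, colDet]
  nth_rw 2 [← det_transpose]
  rw [← det_mul]
  congr
  ext k k'
  simp [mul_apply, sum_image hg.injOn]

theorem colDet_sq_eq_of_image_eq [DecidableEq ι] {h : κ → ι} (hg : Injective g) (hh : Injective h)
    (himage : univ.image g = univ.image h) : colDet v g ^ 2 = colDet v h ^ 2 := by
  rw [colDet_sq_eq_det_gram hg, colDet_sq_eq_det_gram hh, himage]

end colDet

section reducedDet

variable {ι κ K : Type*} [Fintype ι] [DecidableEq ι] [Fintype κ] [DecidableEq κ] [Field K]
  {M : Matrix ι ι K} {v : κ → ι → K}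

theorem exists_reducedDet_image_update_eq (hM : M.IsSymm) (hker : ∀ k, M *ᵥ v k = 0)
    {g : κ → ι} (hg : colDet v g ≠ 0) (i : κ) :
    ∃ c : K, ∀ x, Injective (update g i x) →
      M.reducedDet (univ.image (update g i x)) = c * colDet v (update g i x) ^ 2 := by
  set S := (univ.erase i).image g
  set u := fun x => colDet v (update g i x)
  have hu : M *ᵥ u = 0 := mulVec_colDet_update_eq_zero hker i
  have huS : ∀ x ∈ S, u x = 0 := by
    simp only [S, mem_image, mem_erase]
    rintro _ ⟨j, ⟨hji, -⟩, rfl⟩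
    exact colDet_update_apply_of_ne v g hji
  have hgi : g i ∉ S := by
    simp only [S, mem_image, mem_erase]
    rintro ⟨j, ⟨hji, -⟩, hj⟩
    exact hji (injective_of_colDet_ne_zero hg hj)
  have hw0 : (fun y : {x // x ∉ S} => u y) ≠ 0 := fun h =>
    hg (by simpa [u] using congrFun h ⟨g i, hgi⟩)
  obtain ⟨c, hc⟩ := (hM.submatrix _).exists_adjugate_eq_smul_vecMulVec
    (mulVec_submatrix_compl_eq_zero hu huS) hw0
  refine ⟨c, fun x hx => ?_⟩
  have hxS : x ∉ S := by
    simp only [S, mem_image, mem_erase]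
    rintro ⟨j, ⟨hji, -⟩, hj⟩
    exact hji (hx (by simp [update_of_ne hji, hj]))
  rw [image_univ_update, ← adjugate_submatrix_compl_apply_self M hxS, hc]
  simp [vecMulVec_apply, sq, u]

theorem reducedDet_image_eq_zero_of_colDet_eq_zero (hv : LinearIndependent K v)
    (hker : ∀ k, M *ᵥ v k = 0) {g : κ → ι} (hg : colDet v g = 0) :
    M.reducedDet (univ.image g) = 0 := by
  obtain ⟨c, hc0, hc⟩ := exists_vecMul_eq_zero_iff.mpr hg
  refine reducedDet_eq_zero_of_mulVec_eq_zero (u := ∑ k, c k • v k) ?_ ?_ ?_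
  · simp [mulVec_sum, mulVec_smul, hker]
  · exact fun h => hc0 (funext (Fintype.linearIndependent_iff.mp hv c h))
  · simp only [mem_image]
    rintro _ ⟨l, -, rfl⟩
    simpa [vecMul, dotProduct, Finset.sum_apply] using congrFun hc l

theorem reducedDet_mul_colDet_sq_comm_of_ne_zero (hM : M.IsSymm) (hker : ∀ k, M *ᵥ v k = 0)
    {g h : κ → ι} (hg : colDet v g ≠ 0) (hh : colDet v h ≠ 0) :
    M.reducedDet (univ.image g) * colDet v h ^ 2 =
      M.reducedDet (univ.image h) * colDet v g ^ 2 := by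
  induction hd : (univ.filter fun j => g j ∉ univ.image h).card generalizing g with
  | zero =>
    have hsub (j : κ) : g j ∈ univ.image h := by
      simpa using filter_eq_empty_iff.mp (card_eq_zero.mp hd) (mem_univ j)
    have himage : univ.image g = univ.image h := by
      refine eq_of_subset_of_card_le (image_subset_iff.mpr fun j _ => hsub j) ?_
      rw [card_image_of_injective _ (injective_of_colDet_ne_zero hg),
        card_image_of_injective _ (injective_of_colDet_ne_zero hh)]
    rw [himage, colDet_sq_eq_of_image_eq (injective_of_colDet_ne_zero hg)
      (injective_of_colDet_ne_zero hh) himage]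
  | succ d ih =>
    obtain ⟨i, hi⟩ : (univ.filter fun j => g j ∉ univ.image h).Nonempty :=
      card_pos.mp (by omega)
    obtain ⟨l, hl⟩ := exists_colDet_update_ne_zero hg hh i
    obtain ⟨c, hc⟩ := exists_reducedDet_image_update_eq hM hker hg i
    have hcg := hc (g i) (by simpa using injective_of_colDet_ne_zero hg)
    rw [update_eq_self] at hcg
    have hd' : (univ.filter fun j => update g i (h l) j ∉ univ.image h).card = d := by
      rw [show (univ.filter fun j => update g i (h l) j ∉ univ.image h) =
          (univ.filter fun j => g j ∉ univ.image h).erase i by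
        ext j
        by_cases hj : j = i <;> simp [hj, update_of_ne]]
      rw [card_erase_of_mem hi, hd, Nat.add_sub_cancel]
    have hih := ih hl hd'
    rw [hc (h l) (injective_of_colDet_ne_zero hl)] at hih
    have hch : c * colDet v h ^ 2 = M.reducedDet (univ.image h) :=
      mul_left_cancel₀ (pow_ne_zero 2 hl) (by linear_combination hih)
    rw [hcg]
    linear_combination colDet v g ^ 2 * hch

theorem reducedDet_mul_colDet_sq_comm (hM : M.IsSymm) (hv : LinearIndependent K v)
    (hker : ∀ k, M *ᵥ v k = 0) (g h : κ → ι) :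
    M.reducedDet (univ.image g) * colDet v h ^ 2 =
      M.reducedDet (univ.image h) * colDet v g ^ 2 := by
  by_cases hg : colDet v g = 0
  · rw [hg, reducedDet_image_eq_zero_of_colDet_eq_zero hv hker hg]
    ring
  by_cases hh : colDet v h = 0
  · rw [hh, reducedDet_image_eq_zero_of_colDet_eq_zero hv hker hh]
    ring
  exact reducedDet_mul_colDet_sq_comm_of_ne_zero hM hker hg hh

end reducedDet

theorem reduced_determinant_invariance_general
    (n : ℕ)
    (M : Matrix (Fin n) (Fin n) ℂ) (hM : M.IsSymm)
    (v : Fin 3 → Fin n → ℂ) (hv : LinearIndependent ℂ v)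
    (hker : ∀ k : Fin 3, M.mulVec (v k) = 0)
    (S T : Finset (Fin n))
    (e : Fin 3 ≃ {x : Fin n // x ∈ S}) (f : Fin 3 ≃ {x : Fin n // x ∈ T}) :
    (M.submatrix (Subtype.val : {x : Fin n // x ∉ S} → Fin n) Subtype.val).det *
        (Matrix.det (Matrix.of fun k l : Fin 3 => v k (f l : Fin n))) ^ 2 =
      (M.submatrix (Subtype.val : {x : Fin n // x ∉ T} → Fin n) Subtype.val).det *
        (Matrix.det (Matrix.of fun k l : Fin 3 => v k (e l : Fin n))) ^ 2 := by
  have himage {S : Finset (Fin n)} (e : Fin 3 ≃ {x // x ∈ S}) :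
      univ.image (fun l => (e l : Fin n)) = S := by
    ext x
    simp only [mem_image, mem_univ, true_and]
    exact ⟨by rintro ⟨l, rfl⟩; exact (e l).2, fun hx => ⟨e.symm ⟨x, hx⟩, by simp⟩⟩
  have h := reducedDet_mul_colDet_sq_comm hM hv hker (fun l => (e l : Fin n))
    (fun l => (f l : Fin n))
  rwa [himage, himage] at h

/-- **Invariance of the thrice-reduced determinant.**
Let `n ≥ 3`, let `M` be a symmetric `n×n` complex matrix, and let
`v¹, v², v³ ∈ ℂⁿ` be linearly independent vectors with `M vᵏ = 0`.  For a
3-element subset `S` of indices, `|M^S_S|` denotes the determinant of the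
matrix obtained from `M` by deleting the rows and columns indexed by `S`, and
`V_S` is the 3×3 matrix whose `(k,s)` entry is `vᵏ_s` for `s ∈ S` (indexed via
an arbitrary enumeration of `S`).  Then for any two 3-element subsets `S, T`:
`|M^S_S| · (det V_T)² = |M^T_T| · (det V_S)²`. -/
theorem reduced_determinant_invariance
    (n : ℕ) (hn : 3 ≤ n)
    (M : Matrix (Fin n) (Fin n) ℂ) (hM : M.IsSymm)
    (v : Fin 3 → Fin n → ℂ) (hv : LinearIndependent ℂ v)
    (hker : ∀ k : Fin 3, M.mulVec (v k) = 0)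
    (S T : Finset (Fin n)) (hS : S.card = 3) (hT : T.card = 3)
    (e : Fin 3 ≃ {x : Fin n // x ∈ S}) (f : Fin 3 ≃ {x : Fin n // x ∈ T}) :
    (M.submatrix (Subtype.val : {x : Fin n // x ∉ S} → Fin n) Subtype.val).det *
        (Matrix.det (Matrix.of fun k l : Fin 3 => v k (f l : Fin n))) ^ 2 =
      (M.submatrix (Subtype.val : {x : Fin n // x ∉ T} → Fin n) Subtype.val).det *
        (Matrix.det (Matrix.of fun k l : Fin 3 => v k (e l : Fin n))) ^ 2 :=
  reduced_determinant_invariance_general n M hM v hv hker S T e f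
end
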